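/- arXiv:2302.05046 — 2 statements merged into one kernel-verified Lean document; each statement's English description precedes it below -/
import Mathlib

section
/- For a finite mixture density p(y) = Σ_i w_i p_i(y) with weights w_i ≥ 0 summing to 1, the differential entropy satisfies H(Y) = -∫ p(y) log p(y) dy ≥ -Σ_i w_i log(Σ_j w_j ∫ p_i(y) p_j(y) dy), provided all integrals are finite. -/
open MeasureTheory Real

/-- Jensen lower bound on the differential entropy of a finite mixture density
`p = ∑ i, w i • p i`: `H(Y) ≥ -∑ i w i log (∑ j w j ∫ p i p j)`. -/
theorem mixture_entropy_lower_bound (n : ℕ) (w : Fin n → ℝ) (p : Fin n → ℝ → ℝ)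
    (hw : ∀ i, 0 ≤ w i) (hwsum : ∑ i, w i = 1)
    (hp_nonneg : ∀ i y, 0 ≤ p i y)
    (hp_meas : ∀ i, Measurable (p i))
    (hp_int : ∀ i, ∫ y, p i y = 1)
    (hmix_int : Integrable (fun y => (∑ i, w i * p i y) * Real.log (∑ i, w i * p i y)))
    (hprod_int : ∀ i j, Integrable (fun y => p i y * p j y)) :
    -(∫ y, (∑ i, w i * p i y) * Real.log (∑ i, w i * p i y)) ≥
      -(∑ i, w i * Real.log (∑ j, w j * ∫ y, p i y * p j y)) := by
  set P : ℝ → ℝ := fun y => ∑ i, w i * p i y with hPdef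
  set c : Fin n → ℝ := fun i => ∑ j, w j * ∫ y, p i y * p j y with hcdef
  -- each `p i` is integrable since its integral is 1 ≠ 0
  have hpi_int : ∀ i, Integrable (p i) := by
    intro i
    by_contra h
    have := integral_undef h
    rw [hp_int i] at this
    norm_num at this
  have hP_nonneg : ∀ y, 0 ≤ P y := fun y =>
    Finset.sum_nonneg fun i _ => mul_nonneg (hw i) (hp_nonneg i y)
  -- p i * P rewritten as a finite sum
  have hpiP_eq : ∀ i, (fun y => p i y * P y) = fun y => ∑ j, w j * (p i y * p j y) := by
    intro i
    funext y
    simp only [hPdef, Finset.mul_sum]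
    exact Finset.sum_congr rfl fun j _ => by ring
  have hpiP_int : ∀ i, Integrable (fun y => p i y * P y) := by
    intro i
    rw [hpiP_eq i]
    exact integrable_finset_sum _ fun j _ => (hprod_int i j).const_mul _
  have hpiP_integral : ∀ i, (∫ y, p i y * P y) = c i := by
    intro i
    rw [hpiP_eq i, integral_finset_sum _ fun j _ => (hprod_int i j).const_mul _]
    exact Finset.sum_congr rfl fun j _ => integral_const_mul _ _
  -- positivity of c i when w i > 0
  have hc_term_nonneg : ∀ i j, 0 ≤ w j * ∫ y, p i y * p j y := fun i j =>
    mul_nonneg (hw j)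
      (integral_nonneg fun y => mul_nonneg (hp_nonneg i y) (hp_nonneg j y))
  have hc_pos : ∀ i, 0 < w i → 0 < c i := by
    intro i hwi
    have hsq_nonneg : (0:ℝ) ≤ ∫ y, p i y * p i y :=
      integral_nonneg fun y => mul_nonneg (hp_nonneg i y) (hp_nonneg i y)
    have hsq : 0 < ∫ y, p i y * p i y := by
      rcases hsq_nonneg.lt_or_eq with h | h
      · exact h
      · exfalso
        have hz : (fun y => p i y * p i y) =ᵐ[volume] 0 :=
          (integral_eq_zero_iff_of_nonneg
            (fun y => mul_nonneg (hp_nonneg i y) (hp_nonneg i y)) (hprod_int i i)).mp h.symm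
        have hz' : p i =ᵐ[volume] 0 := hz.mono fun y hy => by
          simpa [mul_self_eq_zero] using hy
        have := integral_congr_ae hz'
        rw [hp_int i] at this
        simp at this
    calc (0:ℝ) < w i * ∫ y, p i y * p i y := mul_pos hwi hsq
      _ ≤ c i := Finset.single_le_sum (fun j _ => hc_term_nonneg i j) (Finset.mem_univ i)
  -- the comparison function
  set g : Fin n → ℝ → ℝ := fun i y =>
    (w i / c i) * (p i y * P y) + (w i * (Real.log (c i) - 1)) * p i y with hgdef
  have hg_int : ∀ i, Integrable (g i) :=
    fun i => ((hpiP_int i).const_mul _).add ((hpi_int i).const_mul _)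
  have hg_integral : ∀ i, (∫ y, g i y) = w i * Real.log (c i) := by
    intro i
    have : (∫ y, g i y) = (w i / c i) * (∫ y, p i y * P y)
        + (w i * (Real.log (c i) - 1)) * (∫ y, p i y) := by
      rw [integral_add ((hpiP_int i).const_mul _) ((hpi_int i).const_mul _),
        integral_const_mul, integral_const_mul]
    rw [this, hpiP_integral i, hp_int i]
    rcases (hw i).lt_or_eq with hwi | hwi
    · have hci := hc_pos i hwi
      field_simp
      ring
    · rw [← hwi]
      ring
  -- pointwise inequality
  have hpt : ∀ y, P y * Real.log (P y) ≤ ∑ i, g i y := by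
    intro y
    rcases (hP_nonneg y).lt_or_eq with hPy | hPy
    · -- P y > 0
      have : P y * Real.log (P y) = ∑ i, (w i * p i y) * Real.log (P y) := by
        rw [← Finset.sum_mul]
      rw [this]
      apply Finset.sum_le_sum
      intro i _
      rcases eq_or_lt_of_le (mul_nonneg (hw i) (hp_nonneg i y)) with h0 | h0
      · -- w i * p i y = 0
        rw [← h0]
        have : g i y = 0 := by
          rcases mul_eq_zero.mp h0.symm with h | h
          · simp [hgdef, h]
          · simp [hgdef, h]
        rw [this]
        simp
      · -- w i > 0 and p i y > 0
        have hwi : 0 < w i := by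
          rcases (hw i).lt_or_eq with h | h
          · exact h
          · exfalso; rw [← h] at h0; simp at h0
        have hpi : 0 < p i y := by
          rcases (hp_nonneg i y).lt_or_eq with h | h
          · exact h
          · exfalso; rw [← h] at h0; simp at h0
        have hci := hc_pos i hwi
        have hlog : Real.log (P y) ≤ P y / c i + (Real.log (c i) - 1) := by
          have h1 : Real.log (P y / c i) ≤ P y / c i - 1 :=
            Real.log_le_sub_one_of_pos (div_pos hPy hci)
          rw [Real.log_div (ne_of_gt hPy) (ne_of_gt hci)] at h1
          linarith
        have := mul_le_mul_of_nonneg_left hlog (le_of_lt h0)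
        calc (w i * p i y) * Real.log (P y)
            ≤ (w i * p i y) * (P y / c i + (Real.log (c i) - 1)) := this
          _ = g i y := by
              simp only [hgdef]
              field_simp
    · -- P y = 0
      rw [← hPy]
      have hterm : ∀ i, w i * p i y = 0 := by
        intro i
        have := (Finset.sum_eq_zero_iff_of_nonneg
          (fun i _ => mul_nonneg (hw i) (hp_nonneg i y))).mp hPy.symm
        exact this i (Finset.mem_univ i)
      have : ∀ i, g i y = 0 := by
        intro i
        have h := hterm i
        rcases mul_eq_zero.mp h with h | h
        · simp [hgdef, h]
        · simp [hgdef, h]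
      simp [this]
  -- integrate
  have hsum_int : Integrable (fun y => ∑ i, g i y) :=
    integrable_finset_sum _ fun i _ => hg_int i
  have hmain : (∫ y, P y * Real.log (P y)) ≤ ∫ y, ∑ i, g i y :=
    integral_mono hmix_int hsum_int hpt
  rw [integral_finset_sum _ fun i _ => hg_int i] at hmain
  have : (∑ i, ∫ y, g i y) = ∑ i, w i * Real.log (c i) :=
    Finset.sum_congr rfl fun i _ => hg_integral i
  rw [this] at hmain
  exact neg_le_neg hmain
end

section
/- Concavity from I-MMSE: if R(s) = log₂(e)·∫₀^s m(t) dt with m nonnegative and nonincreasing, then f(λ) = λ·R(ρ/λ) is a nondecreasing concave function of λ on (0, 1] for any fixed ρ > 0. -/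
open MeasureTheory

/-- Concavity from I-MMSE: if `R(s) = log₂(e) · ∫₀^s m(t) dt` with `m` nonnegative and
nonincreasing on `(0,∞)` (and interval-integrable near `0`), then for fixed `ρ > 0` the
bandwidth-scaled sensing rate `f(λ) = λ · R(ρ/λ)` is nondecreasing and concave on `(0,1]`. -/
theorem bandwidth_scaled_sensing_rate_monotone_concave (m : ℝ → ℝ) (ρ : ℝ) (hρ : 0 < ρ)
    (hnonneg : ∀ t ∈ Set.Ioi (0:ℝ), 0 ≤ m t)
    (hanti : AntitoneOn m (Set.Ioi 0))
    (hint : ∀ s : ℝ, 0 < s → IntervalIntegrable m volume 0 s) :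
    MonotoneOn
        (fun l => l * (Real.logb 2 (Real.exp 1) * ∫ t in (0:ℝ)..(ρ / l), m t))
        (Set.Ioc 0 1) ∧
      ConcaveOn ℝ (Set.Ioc 0 1)
        (fun l => l * (Real.logb 2 (Real.exp 1) * ∫ t in (0:ℝ)..(ρ / l), m t)) := by
  set c := Real.logb 2 (Real.exp 1) with hc
  have hc0 : 0 ≤ c := Real.logb_nonneg one_lt_two (by
    have := Real.add_one_le_exp (1:ℝ); linarith)
  set g : ℝ → ℝ := fun u => ∫ t in (0:ℝ)..u, m t with hg
  -- integrability on subintervals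
  have hII : ∀ {a b : ℝ}, 0 < a → a ≤ b → IntervalIntegrable m volume a b := by
    intro a b ha hab
    have hb : 0 < b := lt_of_lt_of_le ha hab
    refine (hint b hb).mono_set ?_
    rw [Set.uIcc_of_le hab, Set.uIcc_of_le hb.le]
    exact Set.Icc_subset_Icc ha.le le_rfl
  -- upper bound:  ∫_a^b m ≤ (b-a) m a
  have hupper : ∀ {a b : ℝ}, 0 < a → a ≤ b → (∫ t in a..b, m t) ≤ (b - a) * m a := by
    intro a b ha hab
    have h := intervalIntegral.integral_mono_on hab (hII ha hab) intervalIntegrable_const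
      (fun t ht => hanti (Set.mem_Ioi.mpr ha) (Set.mem_Ioi.mpr (lt_of_lt_of_le ha ht.1)) ht.1)
    simpa [smul_eq_mul] using h
  -- lower bound: (b-a) m b ≤ ∫_a^b m
  have hlower : ∀ {a b : ℝ}, 0 < a → a ≤ b → (b - a) * m b ≤ ∫ t in a..b, m t := by
    intro a b ha hab
    have h := intervalIntegral.integral_mono_on hab intervalIntegrable_const (hII ha hab)
      (fun t ht => hanti (Set.mem_Ioi.mpr (lt_of_lt_of_le ha ht.1))
        (Set.mem_Ioi.mpr (lt_of_lt_of_le ha hab)) ht.2)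
    simpa [smul_eq_mul] using h
  -- a * m a ≤ g a
  have hgl : ∀ {a : ℝ}, 0 < a → a * m a ≤ g a := by
    intro a ha
    have hInt : IntegrableOn m (Set.Ioc 0 a) volume :=
      (intervalIntegrable_iff_integrableOn_Ioc_of_le ha.le).mp (hint a ha)
    have h1 : g a = ∫ t in Set.Ioc 0 a, m t := intervalIntegral.integral_of_le ha.le
    have h2 : (∫ _t in Set.Ioc 0 a, m a) ≤ ∫ t in Set.Ioc 0 a, m t := by
      refine setIntegral_mono_on ((integrableOn_const_iff (C := m a)).mpr ?_) hInt measurableSet_Ioc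
        (fun t ht => hanti (Set.mem_Ioi.mpr ht.1) (Set.mem_Ioi.mpr ha) ht.2)
      exact Or.inr (by simp [Real.volume_Ioc])
    rw [h1]
    have h3 : (∫ _t in Set.Ioc 0 a, m a) = a * m a := by
      simp [Real.volume_Ioc, ENNReal.toReal_ofReal ha.le, ha.le]
    linarith [h2, h3.symm.le]
  -- adjacency
  have hadj : ∀ {a b : ℝ}, 0 < a → a ≤ b →
      g a + (∫ t in a..b, m t) = g b := by
    intro a b ha hab
    exact intervalIntegral.integral_add_adjacent_intervals (hint a ha) (hII ha hab)
  -- concavity of g on (0,∞), ordered version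
  have gconc_le : ∀ u v α β : ℝ, 0 < u → u ≤ v → 0 ≤ α → 0 ≤ β → α + β = 1 →
      α * g u + β * g v ≤ g (α * u + β * v) := by
    intro u v α β hu huv hα hβ hab
    set w := α * u + β * v with hw
    have hwu : u ≤ w := by nlinarith
    have hwv : w ≤ v := by nlinarith
    have hw0 : 0 < w := lt_of_lt_of_le hu hwu
    have h1 : (w - u) * m w ≤ ∫ t in u..w, m t := hlower hu hwu
    have h2 : (∫ t in w..v, m t) ≤ (v - w) * m w := hupper hw0 hwv
    have s1 : g u + (∫ t in u..w, m t) = g w := hadj hu hwu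
    have s2 : g w + (∫ t in w..v, m t) = g v := hadj hw0 hwv
    have e3 : α * (w - u) = β * (v - w) := by
      rw [hw]; linear_combination (α * u + β * v) * hab
    have h1' := mul_le_mul_of_nonneg_left h1 hα
    have h2' := mul_le_mul_of_nonneg_left h2 hβ
    have e4 : α * ((w - u) * m w) = β * ((v - w) * m w) := by
      linear_combination m w * e3
    have s1' : α * g u + α * (∫ t in u..w, m t) = α * g w := by linear_combination α * s1
    have s2' : β * g w + β * (∫ t in w..v, m t) = β * g v := by linear_combination β * s2
    have e5 : α * g w + β * g w = g w := by linear_combination (g w) * hab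
    linarith
  have gconc : ∀ u v α β : ℝ, 0 < u → 0 < v → 0 ≤ α → 0 ≤ β → α + β = 1 →
      α * g u + β * g v ≤ g (α * u + β * v) := by
    intro u v α β hu hv hα hβ hab
    rcases le_total u v with h | h
    · exact gconc_le u v α β hu h hα hβ hab
    · have := gconc_le v u β α hv h hβ hα (by linarith)
      have e : β * v + α * u = α * u + β * v := by ring
      rw [e] at this; linarith
  -- monotonicity
  have mono : MonotoneOn (fun l => l * (c * g (ρ / l))) (Set.Ioc 0 1) := by
    intro x hx y hy hxy
    have hx0 : 0 < x := hx.1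
    have hy0 : 0 < y := hy.1
    set u := ρ / y with hu
    set v := ρ / x with hv
    have hu0 : 0 < u := div_pos hρ hy0
    have huv : u ≤ v := by
      apply div_le_div_of_nonneg_left hρ.le hx0 hxy |>.trans_eq rfl
    have hv0 : 0 < v := lt_of_lt_of_le hu0 huv
    have hA : (∫ t in u..v, m t) ≤ (v - u) * m u := hupper hu0 huv
    have hB : u * m u ≤ g u := hgl hu0
    have hs : g u + (∫ t in u..v, m t) = g v := hadj hu0 huv
    have hkey : u * g v ≤ v * g u := by nlinarith
    have hxy' : x * g v ≤ y * g u := by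
      have hρ' : ρ ≠ 0 := hρ.ne'
      rw [hu, hv] at hkey
      rw [div_mul_eq_mul_div, div_mul_eq_mul_div, div_le_div_iff₀ hy0 hx0] at hkey
      nlinarith
    calc x * (c * g v) = c * (x * g v) := by ring
      _ ≤ c * (y * g u) := mul_le_mul_of_nonneg_left hxy' hc0
      _ = y * (c * g u) := by ring
  refine ⟨mono, ?_⟩
  refine ⟨convex_Ioc 0 1, ?_⟩
  intro x hx y hy a b ha hb hab
  simp only [smul_eq_mul]
  have hx0 : 0 < x := hx.1
  have hy0 : 0 < y := hy.1
  rcases eq_or_lt_of_le ha with rfl | ha0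
  · have hb1 : b = 1 := by linarith
    simp [hb1]
  rcases eq_or_lt_of_le hb with rfl | hb0
  · have ha1 : a = 1 := by linarith
    simp [ha1]
  set z := a * x + b * y with hz
  have hz0 : 0 < z := by positivity
  clear_value z
  set α := a * x / z with hα
  set β := b * y / z with hβ
  have hα0 : 0 ≤ α := by positivity
  have hβ0 : 0 ≤ β := by positivity
  have hαβ : α + β = 1 := by
    rw [hα, hβ, ← add_div, ← hz, div_self hz0.ne']
  have hcomb : α * (ρ / x) + β * (ρ / y) = ρ / z := by
    have h1 : α * (ρ / x) = a * ρ / z := by rw [hα]; field_simp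
    have h2 : β * (ρ / y) = b * ρ / z := by rw [hβ]; field_simp
    rw [h1, h2, ← add_div]
    congr 1
    linear_combination ρ * hab
  have hsum := gconc (ρ / x) (ρ / y) α β (div_pos hρ hx0) (div_pos hρ hy0) hα0 hβ0 hαβ
  rw [hcomb] at hsum
  have hzα : z * α = a * x := by rw [hα]; field_simp
  have hzβ : z * β = b * y := by rw [hβ]; field_simp
  have step : a * (x * (c * g (ρ / x))) + b * (y * (c * g (ρ / y)))
      = z * c * (α * g (ρ / x) + β * g (ρ / y)) := by
    have : z * c * (α * g (ρ / x) + β * g (ρ / y))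
        = (z * α) * (c * g (ρ / x)) + (z * β) * (c * g (ρ / y)) := by ring
    rw [this, hzα, hzβ]; ring
  rw [step]
  calc z * c * (α * g (ρ / x) + β * g (ρ / y)) ≤ z * c * g (ρ / z) :=
        mul_le_mul_of_nonneg_left hsum (by positivity)
    _ = z * (c * g (ρ / z)) := by ring
end
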